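/- arXiv:2501.07428 — 8 statements merged into one kernel-verified Lean document; each statement's English description precedes it below -/
import Mathlib

section
/- Let Σ be a finite alphabet and let L ⊆ Σ* be any language. Then L contains an infinite antichain for the prefix relation if and only if there exists an antichain branch for L, that is, an infinite word α : ℕ → Σ such that for every finite prefix u of α there exists a word v ∈ Σ* with u·v ∈ L and u·v not a finite prefix of α. -/
/-- The finite prefix of length `n` of the infinite word `α`. -/
def finPrefix {A : Type*} (α : ℕ → A) (n : ℕ) : List A :=
  (List.range n).map α

/-!
Since the alphabet is finite, a word that is a prefix of infinitely many words of `S` has a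
one-letter extension that still is (König's lemma); iterating from the empty word yields an
infinite word `α`. If `S` is an antichain it meets the chain of prefixes of `α` at most once,
so below each prefix of `α` lie words of `S` that are not prefixes of `α`.

Conversely, let `w n = α[0,n) ++ v n` be words that are not prefixes of `α`. For
`n > |w m|`, the word `w n` agrees with `α` up to position `|w m|`, where `w m` has already
left `α`, so `w m` and `w n` are incomparable; a greedily extracted subsequence is therefore
an infinite antichain.
-/

open Filter Set

theorem Filter.exists_seq_forall_lt_of_eventually {r : ℕ → ℕ → Prop}
    (hr : ∀ m, ∀ᶠ n in atTop, r m n) : ∃ φ : ℕ → ℕ, ∀ ⦃m n⦄, m < n → r (φ m) (φ n) := by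
  have hfin (t : Set ℕ) (ht : t.Finite) : ∃ n, ∀ m ∈ t, r m n :=
    ((eventually_all_finite ht).2 fun m _ => hr m).exists
  obtain ⟨φ, hφ⟩ := seq_of_forall_finite_exists hfin
  exact ⟨φ, fun m n hmn => hφ n (φ m) ⟨m, hmn, rfl⟩⟩

theorem exists_infinite_pairwise_incompRel_subset_range {β : Type*} {r : β → β → Prop}
    [Std.Refl r] (w : ℕ → β) (h : ∀ m, ∀ᶠ n in atTop, IncompRel r (w m) (w n)) :
    ∃ S ⊆ range w, S.Infinite ∧ S.Pairwise (IncompRel r) := by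
  obtain ⟨φ, hφ⟩ := exists_seq_forall_lt_of_eventually h
  have hφ' : Pairwise fun i j => IncompRel r (w (φ i)) (w (φ j)) := fun i j hij =>
    hij.lt_or_gt.elim (fun hlt => hφ hlt) (fun hgt => (hφ hgt).symm)
  refine ⟨range (w ∘ φ), range_comp_subset_range φ w,
    infinite_range_of_injective fun i j hwij => ?_, ?_⟩
  · by_contra hij
    exact (hφ' hij).ne hwij
  · rintro _ ⟨i, rfl⟩ _ ⟨j, rfl⟩ hwij
    exact hφ' fun hij => hwij (congrArg (w ∘ φ) hij)

instance {A : Type*} : Std.Refl (List.IsPrefix : List A → List A → Prop) := ⟨List.prefix_refl⟩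

section finPrefix

variable {A : Type*} (α : ℕ → A) {m n : ℕ} {u w : List A}

@[simp]
theorem finPrefix_length : (finPrefix α n).length = n := by
  simp [finPrefix]

theorem finPrefix_succ : finPrefix α (n + 1) = finPrefix α n ++ [α n] := by
  simp [finPrefix, List.range_succ]

theorem take_finPrefix : (finPrefix α n).take m = finPrefix α (min m n) := by
  simp [finPrefix, ← List.map_take]

theorem finPrefix_prefix_finPrefix (h : m ≤ n) : finPrefix α m <+: finPrefix α n := by
  rw [← min_eq_left h, ← take_finPrefix]
  exact List.take_prefix m _

theorem isChain_range_finPrefix : IsChain (· <+: ·) (range (finPrefix α)) := by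
  rintro _ ⟨m, rfl⟩ _ ⟨n, rfl⟩ -
  exact (le_total m n).imp (finPrefix_prefix_finPrefix α) (finPrefix_prefix_finPrefix α)

theorem eq_finPrefix_of_prefix_finPrefix (h : u <+: finPrefix α n) :
    u = finPrefix α u.length := by
  rw [List.prefix_iff_eq_take.1 h, take_finPrefix, finPrefix_length]

theorem incompRel_of_finPrefix_prefix (hu : u ∉ range (finPrefix α)) (hk : u.length < n)
    (hw : finPrefix α n <+: w) : IncompRel (· <+: ·) u w := by
  refine ⟨fun huw => hu ⟨u.length, ?_⟩, fun hwu => ?_⟩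
  · have : u <+: finPrefix α n :=
      List.prefix_of_prefix_length_le huw hw (by simpa using hk.le)
    exact (eq_finPrefix_of_prefix_finPrefix α this).symm
  · have := (hw.trans hwu).length_le
    simp only [finPrefix_length] at this
    omega

end finPrefix

section KonigLemma

variable {A : Type*} [Finite A] {S : Set (List A)}

theorem exists_infinite_prefix_append_singleton {u : List A}
    (h : {w ∈ S | u <+: w}.Infinite) : ∃ a, {w ∈ S | u ++ [a] <+: w}.Infinite := by
  by_contra! hfin
  have hsub : {w ∈ S | u <+: w} ⊆ insert u (⋃ a, {w ∈ S | u ++ [a] <+: w}) := by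
    rintro _ ⟨hwS, t, rfl⟩
    cases t with
    | nil => simp
    | cons a t => exact mem_insert_of_mem _ (mem_iUnion.2 ⟨a, hwS, t, by simp⟩)
  exact h (((finite_iUnion hfin).insert u).subset hsub)

theorem exists_forall_infinite_finPrefix_prefix (hS : S.Infinite) :
    ∃ α : ℕ → A, ∀ n, {w ∈ S | finPrefix α n <+: w}.Infinite := by
  let T := {u : List A // {w ∈ S | u <+: w}.Infinite}
  choose letter hletter using fun u : T => exists_infinite_prefix_append_singleton u.2
  let next : T → T := fun u => ⟨u.1 ++ [letter u], hletter u⟩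
  let branch : ℕ → T := fun n => next^[n] ⟨[], by simpa using hS⟩
  have hbranch (n : ℕ) : finPrefix (fun k => letter (branch k)) n = (branch n).1 := by
    induction n with
    | zero => rfl
    | succ n ih =>
      rw [finPrefix_succ, ih]
      exact congrArg Subtype.val (Function.iterate_succ_apply' next n _).symm
  exact ⟨fun k => letter (branch k), fun n => hbranch n ▸ (branch n).2⟩

theorem exists_finPrefix_append_mem_notMem_range (hS : S.Infinite)
    (hSa : S.Pairwise (IncompRel (· <+: ·))) :
    ∃ α : ℕ → A, ∀ n, ∃ v, finPrefix α n ++ v ∈ S ∧ finPrefix α n ++ v ∉ range (finPrefix α) := by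
  obtain ⟨α, hα⟩ := exists_forall_infinite_finPrefix_prefix hS
  have hsub : (S ∩ range (finPrefix α)).Subsingleton :=
    inter_subsingleton_of_isAntichain_of_isChain (hSa.mono' fun _ _ h => h.1)
      (isChain_range_finPrefix α)
  refine ⟨α, fun n => ?_⟩
  obtain ⟨_, ⟨hwS, v, rfl⟩, hw⟩ := ((hα n).sdiff hsub.finite).nonempty
  exact ⟨v, hwS, fun hwα => hw ⟨hwS, hwα⟩⟩

end KonigLemma

theorem exists_infinite_pairwise_incompRel_of_finPrefix_append_notMem_range {A : Type*}
    (α : ℕ → A) (v : ℕ → List A) (hv : ∀ n, finPrefix α n ++ v n ∉ range (finPrefix α)) :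
    ∃ S ⊆ range fun n => finPrefix α n ++ v n, S.Infinite ∧ S.Pairwise (IncompRel (· <+: ·)) := by
  refine exists_infinite_pairwise_incompRel_subset_range _ fun m => ?_
  filter_upwards [eventually_gt_atTop (finPrefix α m ++ v m).length] with n hn
  exact incompRel_of_finPrefix_prefix α (hv m) hn (List.prefix_append _ _)

/-- For a finite alphabet `A` and any language `L ⊆ A*`,
`L` contains an infinite antichain for the prefix relation iff there exists
an antichain branch for `L`, i.e. an infinite word `α` such that from every
finite prefix of `α` one can reach a word of `L` that is not a prefix of `α`. -/
theorem infinite_prefix_antichain_iff_antichain_branch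
    {A : Type*} [Fintype A] (L : Set (List A)) :
    (∃ S : Set (List A), S ⊆ L ∧ S.Infinite ∧
      ∀ u ∈ S, ∀ v ∈ S, u ≠ v → ¬ u <+: v ∧ ¬ v <+: u)
    ↔
    (∃ α : ℕ → A, ∀ n : ℕ, ∃ v : List A,
      finPrefix α n ++ v ∈ L ∧ ∀ m : ℕ, finPrefix α n ++ v ≠ finPrefix α m) := by
  constructor
  · rintro ⟨S, hSL, hS, hSa⟩
    obtain ⟨α, hα⟩ := exists_finPrefix_append_mem_notMem_range hS hSa
    refine ⟨α, fun n => ?_⟩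
    obtain ⟨v, hvS, hv⟩ := hα n
    exact ⟨v, hSL hvS, fun m hm => hv ⟨m, hm.symm⟩⟩
  · rintro ⟨α, hα⟩
    choose v hvL hv using hα
    obtain ⟨S, hSw, hS, hSa⟩ :=
      exists_infinite_pairwise_incompRel_of_finPrefix_append_notMem_range α v
        fun n ⟨m, hm⟩ => hv n m hm.symm
    exact ⟨S, hSw.trans (range_subset_iff.2 hvL), hS, hSa⟩
end

section
/- Let Σ be a finite alphabet. A language L ⊆ Σ* is well-quasi-ordered by the prefix relation if and only if L is a finite union of chains for the prefix relation. -/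
/-- A subset `L` of words is well-quasi-ordered by the relation `r`. -/
def IsWqoOn {A : Type*} (L : Set (List A)) (r : List A → List A → Prop) : Prop :=
  ∀ f : ℕ → List A, (∀ n, f n ∈ L) → ∃ i j, i < j ∧ r (f i) (f j)

/-- A chain for the relation `r`: any two elements are comparable. -/
def IsChainFor {A : Type*} (C : Set (List A)) (r : List A → List A → Prop) : Prop :=
  ∀ u ∈ C, ∀ v ∈ C, r u v ∨ r v u

section Aux

variable {A : Type*} [Fintype A]

/-- The "ramification set" of `L`: words that are prefixes of two incomparable
elements of `L`. -/
def ramSet (L : Set (List A)) : Set (List A) :=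
  {u | ∃ a ∈ L, ∃ b ∈ L, u <+: a ∧ u <+: b ∧ ¬ a <+: b ∧ ¬ b <+: a}

lemma ramSet_finite_of_wqo (L : Set (List A)) (hW : IsWqoOn L (· <+: ·)) :
    (ramSet L).Finite := by
  classical
  by_contra hfin
  rw [← Set.not_infinite, not_not] at hfin
  -- the predicate "infinitely many elements of ramSet L extend w"
  set Q : List A → Prop := fun w => {u ∈ ramSet L | w <+: u}.Infinite with hQ
  have hQnil : Q [] := by
    have : {u ∈ ramSet L | [] <+: u} = ramSet L := by
      ext u; simp [List.nil_prefix]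
    rw [hQ]; simpa [this] using hfin
  have hstep : ∀ w, Q w → ∃ a : A, Q (w ++ [a]) := by
    intro w hw
    by_contra h
    push_neg at h
    have hfin' : ∀ a : A, {u ∈ ramSet L | w ++ [a] <+: u}.Finite := by
      intro a
      have := h a
      rw [hQ] at this
      exact Set.not_infinite.mp this
    have hsub : {u ∈ ramSet L | w <+: u} ⊆
        {w} ∪ ⋃ a : A, {u ∈ ramSet L | w ++ [a] <+: u} := by
      rintro u ⟨huR, t, rfl⟩
      cases t with
      | nil => left; simp
      | cons a t' =>
        right
        refine Set.mem_iUnion.mpr ⟨a, huR, t', by simp⟩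
    exact hw (Set.Finite.subset
      ((Set.finite_singleton w).union (Set.finite_iUnion hfin')) hsub)
  -- build an infinite branch
  let xs : ℕ → {w : List A // Q w} := fun n =>
    Nat.rec ⟨[], hQnil⟩
      (fun _ p => ⟨p.1 ++ [(hstep p.1 p.2).choose], (hstep p.1 p.2).choose_spec⟩) n
  let x : ℕ → List A := fun n => (xs n).1
  have hxsucc : ∀ n, ∃ a : A, x (n + 1) = x n ++ [a] := fun n =>
    ⟨(hstep (xs n).1 (xs n).2).choose, rfl⟩
  have hxlen : ∀ n, (x n).length = n := by
    intro n
    induction n with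
    | zero => rfl
    | succ n ih =>
      obtain ⟨a, ha⟩ := hxsucc n
      simp [ha, ih]
  have hxmono : ∀ m n, m ≤ n → x m <+: x n := by
    intro m n hmn
    induction n with
    | zero => simp_all
    | succ n ih =>
      rcases Nat.lt_or_ge m (n + 1) with h | h
      · obtain ⟨a, ha⟩ := hxsucc n
        exact (ih (Nat.lt_succ_iff.mp h)).trans (ha ▸ List.prefix_append _ _)
      · have : m = n + 1 := le_antisymm hmn h
        subst this; exact List.prefix_refl _
  -- for each n, some element of L extends x n and is incomparable with the branch
  have key : ∀ n, ∃ c : List A, (c ∈ L ∧ ∀ m, ¬ c <+: x m) ∧ x n <+: c := by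
    intro n
    obtain ⟨u, huR, hxu⟩ := (xs n).2.nonempty
    obtain ⟨a, haL, b, hbL, hua, hub, hab, hba⟩ := huR
    by_cases ha : ∀ m, ¬ a <+: x m
    · exact ⟨a, ⟨haL, ha⟩, hxu.trans hua⟩
    · push_neg at ha
      obtain ⟨ma, hma⟩ := ha
      refine ⟨b, ⟨hbL, fun m hm => ?_⟩, hxu.trans hub⟩
      have h1 : a <+: x (max ma m) := hma.trans (hxmono _ _ (le_max_left _ _))
      have h2 : b <+: x (max ma m) := hm.trans (hxmono _ _ (le_max_right _ _))
      rcases le_total a.length b.length with h | h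
      · exact hab (List.prefix_of_prefix_length_le h1 h2 h)
      · exact hba (List.prefix_of_prefix_length_le h2 h1 h)
  -- construct a bad sequence, contradicting WQO
  let cs : ℕ → {c : List A // c ∈ L ∧ ∀ m, ¬ c <+: x m} := fun k =>
    Nat.rec ⟨(key 0).choose, (key 0).choose_spec.1⟩
      (fun _ p => ⟨(key (p.1.length + 1)).choose,
        (key (p.1.length + 1)).choose_spec.1⟩) k
  let c : ℕ → List A := fun k => (cs k).1
  have hcext : ∀ k, x ((c k).length + 1) <+: c (k + 1) := fun k =>
    (key ((cs k).1.length + 1)).choose_spec.2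
  have hclen : ∀ k, (c k).length < (c (k + 1)).length := by
    intro k
    have h := (hcext k).length_le
    have h2 := hxlen ((c k).length + 1)
    omega
  have hmono : StrictMono fun k => (c k).length := strictMono_nat_of_lt_succ hclen
  obtain ⟨i, j, hij, hpref⟩ := hW c (fun k => (cs k).2.1)
  obtain ⟨j', rfl⟩ : ∃ j', j = j' + 1 := ⟨j - 1, by omega⟩
  have h1 : x ((c j').length + 1) <+: c (j' + 1) := hcext j'
  have h2 : (c i).length ≤ (x ((c j').length + 1)).length := by
    have h3 := hxlen ((c j').length + 1)
    have h4 : (c i).length ≤ (c j').length := hmono.monotone (by omega)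
    omega
  exact (cs i).2.2 ((c j').length + 1) (List.prefix_of_prefix_length_le hpref h1 h2)

end Aux

/-- A language over a finite alphabet is well-quasi-ordered by
the prefix relation iff it is a finite union of chains for the prefix relation. -/
theorem wqo_prefix_iff_finite_union_of_chains
    {A : Type*} [Fintype A] (L : Set (List A)) :
    IsWqoOn L (· <+: ·)
    ↔
    ∃ (n : ℕ) (C : Fin n → Set (List A)),
      (∀ i, IsChainFor (C i) (· <+: ·)) ∧ L = ⋃ i, C i := by
  classical
  constructor
  · intro hW
    have hRfin := ramSet_finite_of_wqo L hW
    obtain ⟨N, hN⟩ : ∃ N, ∀ u ∈ ramSet L, u.length ≤ N := by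
      obtain ⟨N, hN⟩ := (hRfin.image List.length).bddAbove
      exact ⟨N, fun u hu => hN (Set.mem_image_of_mem _ hu)⟩
    set S : Set (Set (List A)) :=
      ((fun v => ({v} : Set (List A))) '' {v ∈ L | v.length ≤ N}) ∪
      ((fun u => {v ∈ L | u <+: v}) '' {u : List A | u.length = N + 1}) with hS
    have hSfin : S.Finite :=
      (Set.Finite.image _ ((List.finite_length_le A N).subset fun v hv => hv.2)).union
      (Set.Finite.image _ (List.finite_length_eq A (N + 1)))
    have hchain : ∀ C ∈ S, IsChainFor C (· <+: ·) := by
      rintro C (⟨v, hv, rfl⟩ | ⟨u, hu, rfl⟩)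
      · intro a ha b hb
        rw [Set.mem_singleton_iff] at ha hb
        subst ha; subst hb
        exact Or.inl (List.prefix_refl _)
      · rintro a ⟨haL, hua⟩ b ⟨hbL, hub⟩
        by_contra h
        push_neg at h
        have hmem : u ∈ ramSet L := ⟨a, haL, b, hbL, hua, hub, h.1, h.2⟩
        have := hN u hmem
        rw [Set.mem_setOf_eq] at hu
        omega
    have hLU : L = ⋃₀ S := by
      ext v
      constructor
      · intro hv
        by_cases h : v.length ≤ N
        · exact ⟨{v}, Or.inl ⟨v, ⟨hv, h⟩, rfl⟩, rfl⟩
        · refine ⟨_, Or.inr ⟨v.take (N + 1), ?_, rfl⟩, hv, List.take_prefix _ _⟩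
          rw [Set.mem_setOf_eq, List.length_take]
          omega
      · rintro ⟨C, hC | hC, hvC⟩
        · obtain ⟨w, hw, rfl⟩ := hC
          rw [Set.mem_singleton_iff] at hvC
          exact hvC ▸ hw.1
        · obtain ⟨u, hu, rfl⟩ := hC
          exact hvC.1
    haveI := hSfin.fintype
    refine ⟨Fintype.card S, fun i => (((Fintype.equivFin S).symm i : S) : Set (List A)),
      fun i => hchain _ ((Fintype.equivFin S).symm i).2, ?_⟩
    rw [hLU, Set.sUnion_eq_iUnion]
    ext v
    simp only [Set.mem_iUnion]
    constructor
    · rintro ⟨s, hs⟩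
      exact ⟨Fintype.equivFin S s, by simpa using hs⟩
    · rintro ⟨i, hi⟩
      exact ⟨_, hi⟩
  · rintro ⟨n, C, hC, rfl⟩ f hf
    have hgex : ∀ k, ∃ i, f k ∈ C i := fun k => Set.mem_iUnion.mp (hf k)
    choose g hg using hgex
    obtain ⟨i, hi⟩ := Finite.exists_infinite_fiber g
    have hi' : (g ⁻¹' {i}).Infinite := Set.infinite_coe_iff.mp hi
    obtain ⟨m, hm⟩ := hi'.nonempty
    by_cases hcase : ∃ k, k ∈ g ⁻¹' {i} ∧ m < k ∧ f m <+: f k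
    · obtain ⟨k, _, hmk, hp⟩ := hcase
      exact ⟨m, k, hmk, hp⟩
    · push_neg at hcase
      have hS' : ((g ⁻¹' {i}) \ {k | k ≤ m}).Infinite := hi'.diff (Set.finite_le_nat m)
      have hmaps : Set.MapsTo f ((g ⁻¹' {i}) \ {k | k ≤ m}) {l | l <+: f m} := by
        intro k hk
        have hkm : m < k := by
          have := hk.2
          rw [Set.mem_setOf_eq] at this
          omega
        have h1 : f k ∈ C i := by
          have := hg k
          rwa [show g k = i from hk.1] at this
        have h2 : f m ∈ C i := by
          have := hg m
          rwa [show g m = i from hm] at this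
        rcases hC i (f m) h2 (f k) h1 with h | h
        · exact absurd h (hcase k hk.1 hkm)
        · exact h
      have hfinp : ({l | l <+: f m} : Set (List A)).Finite :=
        (List.finite_length_le A (f m).length).subset fun l hl => hl.length_le
      obtain ⟨a, ha, b, hb, hne, heq⟩ := hS'.exists_ne_map_eq_of_mapsTo hmaps hfinp
      rcases hne.lt_or_gt with h | h
      · exact ⟨a, b, h, by rw [heq]⟩
      · exact ⟨b, a, h, by rw [heq]⟩
end

section
/- Let (X, ≤) be a partially ordered set and let Σ be a finite alphabet with at least two letters. Then the following are equivalent: (1) there exists an order embedding of (X, ≤) into the set Σ* of finite words ordered by the infix relation; (2) X is countable and for every x ∈ X the set {y ∈ X | y ≤ x} is finite. -/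
/-!
An order embedding into words is injective, so `X` is countable, and it maps `{y | y ≤ x}`
into the finitely many infixes of one word.

Conversely, `x ↦ g '' {y | y ≤ x}` for an injection `g : X → ℕ` embeds `X` into
`(Finset ℕ, ⊆)`, so it suffices to embed the latter. Fix letters `x ≠ y` and let
`N S = ∑ i ∈ S, 2 ^ i`, which is injective and strictly monotone for `⊂`. The code of `S` is
`y xᴺ c₁ xᴺ c₂ ⋯ xᴺ cₖ xᴺ y` with `N = N S` and `c₁, …, cₖ` the codes of the proper subsets
of `S`; its longest run of `x` has length exactly `N S`. If the code of `R` is an infix of the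
code of `S`, comparing runs gives `N R ≤ N S`. Equality forces `R = S`. Otherwise the code of
`R` begins and ends with `y` and contains no `xᴺ`, so it cannot meet a separator `xᴺ` and lies
inside some `cᵢ`; conclude by induction.
-/

open List

namespace List

variable {α : Type*}

theorem replicate_infix_replicate {m n : ℕ} (x : α) (h : m ≤ n) :
    replicate m x <:+: replicate n x :=
  ⟨[], replicate (n - m) x, by rw [nil_append, ← replicate_add, Nat.add_sub_cancel' h]⟩

theorem IsPrefix.prefix_append_dropLast {u a s b : List α} (h : u <+: a ++ s ++ b)
    (hs : ¬ s <:+: u) : u <+: a ++ s.dropLast := by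
  have hsu : ¬ a ++ s <+: u := fun h' => hs ((suffix_append a s).isInfix.trans h'.isInfix)
  have hu : u <+: a ++ s := (prefix_or_prefix_of_prefix h ⟨b, rfl⟩).resolve_right hsu
  have hs₀ : s ≠ [] := by rintro rfl; exact hs nil_infix
  have hlt : u.length < (a ++ s).length :=
    lt_of_le_of_ne hu.length_le fun h' => hsu (hu.eq_of_length h' ▸ prefix_rfl)
  rw [← dropLast_append_of_ne_nil hs₀]
  exact prefix_of_prefix_length_le hu (dropLast_prefix _) (by simp only [length_dropLast]; omega)

theorem IsInfix.infix_append_dropLast_or_tail_append {u a s b : List α}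
    (h : u <:+: a ++ s ++ b) (hs : ¬ s <:+: u) :
    u <:+: a ++ s.dropLast ∨ u <:+: s.tail ++ b := by
  induction a with
  | nil =>
    cases s with
    | nil => exact absurd nil_infix hs
    | cons x s =>
      rcases infix_cons_iff.mp h with h | h
      · exact .inl (IsPrefix.prefix_append_dropLast (a := []) h hs).isInfix
      · exact .inr h
  | cons x a ih =>
    rcases infix_cons_iff.mp h with h | h
    · exact .inl (IsPrefix.prefix_append_dropLast h hs).isInfix
    · exact (ih h).imp_left (·.trans (suffix_cons x _).isInfix)

theorem IsInfix.infix_or_infix_of_notMem {u a b : List α} {x : α} (h : u <:+: a ++ x :: b)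
    (hx : x ∉ u) : u <:+: a ∨ u <:+: b := by
  simpa using infix_append_dropLast_or_tail_append (s := [x]) (by simpa using h)
    (by rwa [singleton_infix_iff])

theorem IsInfix.infix_of_replicate_append {u b : List α} {x y : α} {n : ℕ} (hxy : x ≠ y)
    (hu : u.head? = some y) (h : u <:+: replicate n x ++ b) : u <:+: b := by
  induction n with
  | zero => simpa using h
  | succ n ih =>
    rcases infix_cons_iff.mp h with h | h
    · rcases prefix_cons_iff.mp h with rfl | ⟨t, rfl, -⟩ <;> simp_all
    · exact ih h

theorem IsInfix.infix_of_append_replicate {u a : List α} {x y : α} {n : ℕ} (hxy : x ≠ y)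
    (hu : u.getLast? = some y) (h : u <:+: a ++ replicate n x) : u <:+: a := by
  rw [← reverse_infix, reverse_append, reverse_replicate] at h
  exact reverse_infix.mp (h.infix_of_replicate_append hxy (by rwa [head?_reverse]))

theorem IsInfix.infix_or_infix_of_not_replicate_infix {u a b : List α} {x y : α} {n : ℕ}
    (hxy : x ≠ y) (hhead : u.head? = some y) (hlast : u.getLast? = some y)
    (hrun : ¬ replicate n x <:+: u) (h : u <:+: a ++ replicate n x ++ b) :
    u <:+: a ∨ u <:+: b := by
  rcases h.infix_append_dropLast_or_tail_append hrun with h | h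
  · rw [dropLast_replicate] at h
    exact .inl (h.infix_of_append_replicate hxy hlast)
  · rw [tail_replicate] at h
    exact .inr (h.infix_of_replicate_append hxy hhead)

theorem IsInfix.infix_or_exists_of_infix_append_flatMap {u a s : List α} {L : List (List α)}
    (hsep : ∀ a b, u <:+: a ++ s ++ b → u <:+: a ∨ u <:+: b)
    (h : u <:+: a ++ L.flatMap (s ++ ·)) : u <:+: a ∨ ∃ c ∈ L, u <:+: c := by
  induction L generalizing a with
  | nil => simpa using h
  | cons c L ih =>
    rw [flatMap_cons] at h
    rcases hsep a _ (by simpa only [append_assoc] using h) with h | h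
    · exact .inl h
    · rcases ih h with h | ⟨d, hd, h⟩
      · exact .inr ⟨c, mem_cons_self, h⟩
      · exact .inr ⟨d, mem_cons_of_mem c hd, h⟩

theorem not_replicate_infix_flatMap {x y : α} (hxy : x ≠ y) {n : ℕ} {L : List (List α)}
    (hL : ∀ c ∈ L, ¬ replicate (n + 1) x <:+: c ∧ c.head? = some y ∧ c.getLast? = some y) :
    ¬ replicate (n + 1) x <:+: L.flatMap (replicate n x ++ ·) := by
  have hy : y ∉ replicate (n + 1) x := fun h => hxy (eq_of_mem_replicate h).symm
  induction L with
  | nil => simp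
  | cons c L ih =>
    obtain ⟨hc, hhead, hlast⟩ := hL c mem_cons_self
    have hrest := ih fun d hd => hL d (mem_cons_of_mem c hd)
    obtain ⟨c₁, rfl⟩ := head?_eq_some_iff.mp hhead
    obtain ⟨c₂, hc₂⟩ := getLast?_eq_some_iff.mp hlast
    have hcrest : ¬ replicate (n + 1) x <:+: y :: c₁ ++ L.flatMap (replicate n x ++ ·) := by
      intro h
      rw [hc₂, append_assoc, singleton_append] at h
      rcases h.infix_or_infix_of_notMem hy with h | h
      · exact hc (hc₂ ▸ h.trans (prefix_append _ _).isInfix)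
      · exact hrest h
    intro h
    rw [flatMap_cons, append_assoc, cons_append] at h
    rcases h.infix_or_infix_of_notMem hy with h | h
    · simpa using h.length_le
    · exact hcrest (h.trans (suffix_cons y _).isInfix)

theorem finite_setOf_infix (v : List α) : {u : List α | u <:+: v}.Finite := by
  classical
  refine (v.tails.flatMap inits).toFinset.finite_toSet.subset fun u hu => ?_
  obtain ⟨t, hut, htv⟩ := infix_iff_prefix_suffix.mp hu
  simpa using ⟨t, htv, hut⟩

end List

namespace InfixCode

def weight (S : Finset ℕ) : ℕ := ∑ i ∈ S, 2 ^ i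

theorem weight_lt_weight {R S : Finset ℕ} (h : R ⊂ S) : weight R < weight S :=
  (Finset.geomSum_lt_geomSum_iff_toColex_lt_toColex le_rfl).2
    (Finset.Colex.toColex_lt_toColex_of_ssubset h)

theorem weight_injective : Function.Injective weight :=
  Finset.geomSum_injective le_rfl

variable {α : Type*}

noncomputable def code (x y : α) (S : Finset ℕ) : List α :=
  y :: (S.ssubsets.toList.attach.map (fun R => code x y R.1) ++ [[y]]).flatMap
    (replicate (weight S) x ++ ·)
termination_by S.card
decreasing_by exact Finset.card_lt_card (Finset.mem_ssubsets.mp (Finset.mem_toList.mp R.2))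

theorem code_eq (x y : α) (S : Finset ℕ) : code x y S =
    y :: (S.ssubsets.toList.map (code x y) ++ [[y]]).flatMap (replicate (weight S) x ++ ·) := by
  rw [code]
  simp

variable {x y : α}

theorem head?_code (S : Finset ℕ) : (code x y S).head? = some y := by
  rw [code_eq]; rfl

theorem getLast?_code (S : Finset ℕ) : (code x y S).getLast? = some y := by
  rw [code_eq, flatMap_append, flatMap_singleton, ← append_assoc, ← cons_append, getLast?_concat]

theorem two_le_length_code (S : Finset ℕ) : 2 ≤ (code x y S).length := by
  rw [code_eq, flatMap_append, flatMap_singleton, ← append_assoc]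
  simp only [length_cons, length_append]
  omega

theorem infix_code_of_mem {S : Finset ℕ} {c : List α}
    (hc : c ∈ S.ssubsets.toList.map (code x y) ++ [[y]]) :
    replicate (weight S) x ++ c <:+: code x y S := by
  rw [code_eq]
  exact (infix_of_mem_flatten (mem_map_of_mem hc)).trans (suffix_cons y _).isInfix

theorem replicate_weight_infix_code (S : Finset ℕ) : replicate (weight S) x <:+: code x y S :=
  (prefix_append _ _).isInfix.trans <|
    infix_code_of_mem (mem_append_right _ (mem_singleton_self [y]))

theorem code_infix_code_of_ssubset {R S : Finset ℕ} (h : R ⊂ S) : code x y R <:+: code x y S :=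
  (suffix_append _ _).isInfix.trans <| infix_code_of_mem <|
    mem_append_left _ (mem_map_of_mem (Finset.mem_toList.mpr (Finset.mem_ssubsets.mpr h)))

theorem not_replicate_infix_code (hxy : x ≠ y) (S : Finset ℕ) :
    ¬ replicate (weight S + 1) x <:+: code x y S := by
  induction S using Finset.strongInduction with
  | H S ih =>
    rw [code_eq]
    intro h
    rcases h.infix_or_infix_of_notMem (a := [])
      (fun hy => hxy (eq_of_mem_replicate hy).symm) with h | h
    · simpa using h.length_le
    refine not_replicate_infix_flatMap hxy (fun c hc => ?_) h
    rcases mem_append.mp hc with hc | hc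
    · obtain ⟨R, hR, rfl⟩ := mem_map.mp hc
      have hRS := Finset.mem_ssubsets.mp (Finset.mem_toList.mp hR)
      exact ⟨fun h' => ih R hRS ((replicate_infix_replicate x
        (Nat.succ_le_succ (weight_lt_weight hRS).le)).trans h'), head?_code R, getLast?_code R⟩
    · obtain rfl := mem_singleton.mp hc
      simp [infix_cons_iff, replicate_succ, hxy]

theorem subset_of_code_infix_code (hxy : x ≠ y) {R S : Finset ℕ}
    (h : code x y R <:+: code x y S) : R ⊆ S := by
  induction S using Finset.strongInduction generalizing R with
  | H S ih =>
    have hle : weight R ≤ weight S := by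
      by_contra! hlt
      exact not_replicate_infix_code hxy S
        ((replicate_infix_replicate x hlt).trans ((replicate_weight_infix_code R).trans h))
    obtain heq | hlt := hle.eq_or_lt
    · exact (weight_injective heq).le
    have hrun : ¬ replicate (weight S) x <:+: code x y R := fun h' =>
      not_replicate_infix_code hxy R ((replicate_infix_replicate x hlt).trans h')
    have hsingle : ¬ code x y R <:+: [y] := fun h' => by
      simpa using (two_le_length_code R).trans h'.length_le
    rw [code_eq x y S] at h
    rcases h.infix_or_exists_of_infix_append_flatMap (a := [y]) fun a b =>
        IsInfix.infix_or_infix_of_not_replicate_infix hxy (head?_code R) (getLast?_code R) hrun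
      with h | ⟨c, hc, h⟩
    · exact absurd h hsingle
    rcases mem_append.mp hc with hc | hc
    · obtain ⟨R', hR', rfl⟩ := mem_map.mp hc
      have hR'S := Finset.mem_ssubsets.mp (Finset.mem_toList.mp hR')
      exact (ih R' hR'S h).trans hR'S.subset
    · obtain rfl := mem_singleton.mp hc
      exact absurd h hsingle

theorem code_infix_code_iff (hxy : x ≠ y) {R S : Finset ℕ} :
    code x y R <:+: code x y S ↔ R ⊆ S := by
  refine ⟨subset_of_code_infix_code hxy, fun h => ?_⟩
  obtain h | rfl := h.ssubset_or_eq
  · exact code_infix_code_of_ssubset h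
  · exact infix_rfl

end InfixCode

theorem nonempty_orderEmbedding_finset_nat {X : Type*} [PartialOrder X] [Countable X]
    (h : ∀ x : X, (Set.Iic x).Finite) : Nonempty (X ↪o Finset ℕ) := by
  obtain ⟨g, hg⟩ := exists_injective_nat X
  exact ⟨.ofMapLEIff (fun x => (h x).toFinset.map ⟨g, hg⟩) fun x y => by
    simp [Finset.map_subset_map]⟩

/-- **Kuske.** For a partially ordered set `X` and a finite alphabet `A`
with at least two letters, `X` order-embeds into `(A*, infix)` iff `X` is countable
and every element has a finite downward closure. -/
theorem embeds_into_infix_iff_countable_finite_downsets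
    {X : Type*} [PartialOrder X] {A : Type*} [Fintype A]
    (hA : 2 ≤ Fintype.card A) :
    (∃ f : X → List A, ∀ x y : X, x ≤ y ↔ f x <:+: f y)
    ↔
    (Countable X ∧ ∀ x : X, {y : X | y ≤ x}.Finite) := by
  constructor
  · rintro ⟨f, hf⟩
    have hinj : Function.Injective f := fun x y hxy =>
      le_antisymm ((hf x y).2 (hxy ▸ infix_rfl)) ((hf y x).2 (hxy ▸ infix_rfl))
    exact ⟨hinj.countable, fun x =>
      ((finite_setOf_infix (f x)).preimage hinj.injOn).subset fun y hy => (hf y x).1 hy⟩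
  · rintro ⟨hX, hfin⟩
    obtain ⟨F⟩ := nonempty_orderEmbedding_finset_nat hfin
    obtain ⟨a, b, hab⟩ := Fintype.exists_pair_of_one_lt_card hA
    exact ⟨fun x => InfixCode.code a b (F x), fun x y =>
      ((InfixCode.code_infix_code_iff hab).trans F.le_iff_le).symm⟩
end

section
/- Let u and v be nonempty words over a finite alphabet Σ, with periodic lengths p and q respectively. If u is an infix of v and |u| ≥ p·q, then p = q. -/
/-- The `p`-fold concatenation of the word `x`. -/
def wpow {A : Type*} (x : List A) (p : ℕ) : List A := (List.replicate p x).flatten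

/-- The periodic length of `u`: the minimal length of a nonempty word `x`
such that `u` is an infix of some power of `x`. -/
noncomputable def periodicLength {A : Type*} (u : List A) : ℕ :=
  sInf {n | ∃ x : List A, x ≠ [] ∧ x.length = n ∧ ∃ p : ℕ, u <:+: wpow x p}

section Aux

variable {A : Type*}

def HasPeriod (u : List A) (n : ℕ) : Prop :=
  ∀ i, i + n < u.length → u[i]? = u[i + n]?

theorem wpow_succ (x : List A) (k : ℕ) : wpow x (k + 1) = x ++ wpow x k := by
  simp [wpow, List.replicate_succ]

theorem wpow_zero (x : List A) : wpow x 0 = [] := by simp [wpow]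

theorem wpow_length (x : List A) (k : ℕ) : (wpow x k).length = k * x.length := by
  induction k with
  | zero => simp [wpow_zero]
  | succ k ih => rw [wpow_succ]; simp [ih]; ring

theorem wpow_add (x : List A) (m n : ℕ) : wpow x (m + n) = wpow x m ++ wpow x n := by
  induction m with
  | zero => simp [wpow_zero]
  | succ m ih =>
      rw [show m + 1 + n = (m + n) + 1 from by omega, wpow_succ, wpow_succ, ih,
        List.append_assoc]

theorem wpow_wpow (x : List A) (a b : ℕ) : wpow (wpow x b) a = wpow x (a * b) := by
  induction a with
  | zero => simp [wpow_zero]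
  | succ a ih =>
      rw [wpow_succ, ih, show (a + 1) * b = b + a * b from by ring, wpow_add]

theorem wpow_getElem? (x : List A) (k j : ℕ) (h : j < (wpow x k).length) :
    (wpow x k)[j]? = x[j % x.length]? := by
  induction k generalizing j with
  | zero => simp [wpow_zero] at h
  | succ k ih =>
      rw [wpow_succ] at h ⊢
      by_cases hj : j < x.length
      · rw [List.getElem?_append_left hj, Nat.mod_eq_of_lt hj]
      · rw [List.getElem?_append_right (le_of_not_gt hj),
          ih (j - x.length) (by simp at h; omega),
          ← Nat.mod_eq_sub_mod (le_of_not_gt hj)]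

theorem hasPeriod_wpow (x : List A) (k : ℕ) : HasPeriod (wpow x k) x.length := by
  intro i h
  rw [wpow_getElem? x k i (by omega), wpow_getElem? x k (i + x.length) h,
    Nat.add_mod_right]

theorem infix_getElem? {u v : List A} (h : u <:+: v) :
    ∃ s, s + u.length ≤ v.length ∧ ∀ i, i < u.length → u[i]? = v[s + i]? := by
  obtain ⟨w1, w2, rfl⟩ := h
  refine ⟨w1.length, by simp, ?_⟩
  intro i hi
  rw [List.getElem?_append_left (show w1.length + i < (w1 ++ u).length by simp; omega),
    List.getElem?_append_right (Nat.le_add_right _ _), Nat.add_sub_cancel_left]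

theorem HasPeriod.of_infix {u v : List A} {n : ℕ} (hinf : u <:+: v)
    (h : HasPeriod v n) : HasPeriod u n := by
  obtain ⟨s, hs, hg⟩ := infix_getElem? hinf
  intro i hi
  rw [hg i (by omega), hg (i + n) hi, show s + (i + n) = s + i + n from by omega]
  exact h (s + i) (by omega)

theorem HasPeriod.getElem?_mod {u : List A} {n : ℕ} (hn : 0 < n) (hp : HasPeriod u n) :
    ∀ i, i < u.length → u[i]? = u[i % n]? := by
  intro i
  induction i using Nat.strong_induction_on with
  | _ i ih =>
  intro h
  by_cases hi : i < n
  · rw [Nat.mod_eq_of_lt hi]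
  · have e1 := hp (i - n) (by omega)
    rw [show i - n + n = i from by omega] at e1
    rw [← e1, ih (i - n) (by omega) (by omega), ← Nat.mod_eq_sub_mod (le_of_not_gt hi)]

theorem period_prefix_pow (a : A) {u : List A} {n m : ℕ} (hn : 0 < n)
    (hp : HasPeriod u n) (hm : u.length ≤ m * n) :
    u <+: wpow ((u ++ List.replicate n a).take n) m := by
  set x := (u ++ List.replicate n a).take n with hxd
  have hxl : x.length = n := by simp [hxd]
  rw [List.prefix_iff_eq_take]
  apply List.ext_getElem?
  intro j
  rw [List.getElem?_take]
  by_cases hj : j < u.length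
  · rw [if_pos hj, wpow_getElem? x m j (by rw [wpow_length, hxl]; omega), hxl]
    have hjm : j % n < u.length := lt_of_le_of_lt (Nat.mod_le _ _) hj
    rw [hxd, List.getElem?_take, if_pos (Nat.mod_lt _ hn),
      List.getElem?_append_left hjm]
    exact hp.getElem?_mod hn j hj
  · rw [if_neg hj, List.getElem?_eq_none (by omega)]

theorem fine_wilf : ∀ (q : ℕ) (u : List A) (p : ℕ), 0 < p → p ≤ q →
    p + q ≤ u.length → HasPeriod u p → HasPeriod u q → HasPeriod u (Nat.gcd p q) := by
  intro q
  induction q using Nat.strong_induction_on with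
  | _ q ih =>
  intro u p hp hpq hlen hPp hPq
  rcases eq_or_lt_of_le hpq with rfl | hlt
  · simpa [Nat.gcd_self] using hPp
  · have hsub : HasPeriod u (q - p) := by
      intro i hi
      by_cases hc : i + q < u.length
      · have e1 := hPq i hc
        have e2 := hPp (i + (q - p)) (by omega)
        rw [show i + (q - p) + p = i + q from by omega] at e2
        rw [e1]; exact e2.symm
      · have e1 := hPp (i - p) (by omega)
        rw [show i - p + p = i from by omega] at e1
        have e2 := hPq (i - p) (by omega)
        rw [show i - p + q = i + (q - p) from by omega] at e2
        rw [← e1]; exact e2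
    by_cases hc2 : q - p ≤ p
    · have h := ih p hlt u (q - p) (by omega) hc2 (by omega) hsub hPp
      rwa [Nat.gcd_comm, Nat.gcd_sub_self_right hpq] at h
    · have h := ih (q - p) (by omega) u p hp (by omega) (by omega) hPp hsub
      rwa [Nat.gcd_sub_self_right hpq] at h

theorem wpow_rotate (a b : List A) (k : ℕ) :
    wpow (b ++ a) (k + 1) = b ++ (wpow (a ++ b) k ++ a) := by
  induction k with
  | zero => simp [wpow_succ, wpow_zero]
  | succ k ih =>
      rw [wpow_succ, ih, wpow_succ]
      simp [List.append_assoc]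

end Aux

/-- If `u` and `v` are nonempty words of periodic lengths `p` and `q`,
`u` is an infix of `v`, and `|u| ≥ p·q`, then `p = q`. -/
theorem periodicLength_eq_of_infix_of_long
    {A : Type*} [Fintype A] (u v : List A) (hu : u ≠ []) (hv : v ≠ [])
    (hinf : u <:+: v)
    (hlen : periodicLength u * periodicLength v ≤ u.length) :
    periodicLength u = periodicLength v := by
  classical
  set Su := {n | ∃ x : List A, x ≠ [] ∧ x.length = n ∧ ∃ m : ℕ, u <:+: wpow x m} with hSud
  set Sv := {n | ∃ x : List A, x ≠ [] ∧ x.length = n ∧ ∃ m : ℕ, v <:+: wpow x m} with hSvd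
  have hpdef : periodicLength u = sInf Su := rfl
  have hqdef : periodicLength v = sInf Sv := rfl
  set p := periodicLength u with hpd
  set q := periodicLength v with hqd
  have hSu : Su.Nonempty := ⟨u.length, u, hu, rfl, 1, by simp [wpow]⟩
  have hSv : Sv.Nonempty := ⟨v.length, v, hv, rfl, 1, by simp [wpow]⟩
  obtain ⟨x, hxne, hxl, m, hum⟩ : p ∈ Su := Nat.sInf_mem hSu
  obtain ⟨y, hyne, hyl, k, hvk⟩ : q ∈ Sv := Nat.sInf_mem hSv
  have hp1 : 0 < p := by rw [← hxl]; exact List.length_pos_iff.mpr hxne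
  have hq1 : 0 < q := by rw [← hyl]; exact List.length_pos_iff.mpr hyne
  have huyk : u <:+: wpow y k := hinf.trans hvk
  have hple : p ≤ q := by
    exact Nat.sInf_le ⟨y, hyne, hyl, k, huyk⟩
  have hPu_p : HasPeriod u p := by
    rw [← hxl]; exact (hasPeriod_wpow x m).of_infix hum
  have hPu_q : HasPeriod u q := by
    rw [← hyl]; exact (hasPeriod_wpow y k).of_infix huyk
  have hqlen : q ≤ u.length := le_trans (by nlinarith) hlen
  -- p divides q
  have hdvd : p ∣ q := by
    by_cases h1 : p = 1
    · simp [h1]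
    · have hge2 : 2 ≤ p := by omega
      have hq2 : 2 ≤ q := le_trans hge2 hple
      have hsum : p + q ≤ u.length := by
        have h2 : p + q ≤ p * q := by nlinarith
        omega
      have hfw := fine_wilf q u p hp1 hple hsum hPu_p hPu_q
      set g := Nat.gcd p q with hgd
      have hg1 : 0 < g := Nat.gcd_pos_of_pos_left q hp1
      have hgp : g ∣ p := Nat.gcd_dvd_left p q
      have hgq : g ∣ q := Nat.gcd_dvd_right p q
      have hmul : u.length ≤ (u.length / g + 1) * g := by
        have e : (u.length / g + 1) * g = g * (u.length / g) + g := by ring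
        have h3 := Nat.div_add_mod u.length g
        have h4 := Nat.mod_lt u.length hg1
        omega
      have hpre := period_prefix_pow (u.head hu) hg1 hfw hmul
      have hgmem : g ∈ Su := by
        refine ⟨(u ++ List.replicate g (u.head hu)).take g, ?_, by simp, _, hpre.isInfix⟩
        intro he
        have h5 : ((u ++ List.replicate g (u.head hu)).take g).length = g := by simp
        rw [he] at h5; simp at h5; omega
      have hpg : p ≤ g := by exact Nat.sInf_le hgmem
      have hgle : g ≤ p := Nat.le_of_dvd hp1 hgp
      have hgeq : g = p := le_antisymm hgle hpg
      rw [← hgeq]; exact hgq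
  -- the window of length q in u is a rotation of y, hence a power of a word of length p
  obtain ⟨s, hs, hgetu⟩ := infix_getElem? huyk
  set r := s % q with hrd
  have hrq : r < q := Nat.mod_lt _ hq1
  set b := y.drop r with hbd
  set a' := y.take r with had
  have hbl : b.length = q - r := by simp [hbd, hyl]
  have hal : a'.length = r := by simp [had, hyl]; omega
  have hy_eq : y = a' ++ b := (List.take_append_drop r y).symm
  set w := u.take q with hwd
  have hwl : w.length = q := by simp [hwd]; omega
  have hweq : w = b ++ a' := by
    apply List.ext_getElem?
    intro j
    by_cases hjq : j < q
    · have hju : j < u.length := by omega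
      have lhs1 : w[j]? = u[j]? := by rw [hwd, List.getElem?_take, if_pos hjq]
      have lhs2 := hgetu j hju
      have lhs3 := wpow_getElem? y k (s + j) (by omega)
      have hmod : (s + j) % y.length = (r + j) % q := by
        rw [hyl, hrd, Nat.mod_add_mod]
      rw [lhs1, lhs2, lhs3, hmod]
      by_cases hc : j < q - r
      · rw [List.getElem?_append_left (by omega), hbd, List.getElem?_drop,
          Nat.mod_eq_of_lt (show r + j < q from by omega)]
      · rw [List.getElem?_append_right (by omega), hbl, had, List.getElem?_take,
          if_pos (show j - (q - r) < r from by omega),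
          Nat.mod_eq_sub_mod (show q ≤ r + j from by omega),
          Nat.mod_eq_of_lt (show r + j - q < q from by omega),
          show r + j - q = j - (q - r) from by omega]
    · rw [List.getElem?_eq_none (by omega), List.getElem?_eq_none (by simp; omega)]
  have hPw : HasPeriod w p := hPu_p.of_infix (List.take_prefix q u).isInfix
  set z := (w ++ List.replicate p (u.head hu)).take p with hzd
  have hzl : z.length = p := by simp [hzd]
  have hzne : z ≠ [] := by
    intro he; rw [he] at hzl; simp at hzl; omega
  have hwz : w = wpow z (q / p) := by
    refine (period_prefix_pow (u.head hu) hp1 hPw ?_).eq_of_length ?_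
    · rw [hwl, Nat.div_mul_cancel hdvd]
    · rw [hwl, wpow_length, hzl, Nat.div_mul_cancel hdvd]
  have hyk2 : wpow y k <:+: wpow w (k + 1) := by
    rw [hweq, wpow_rotate, ← hy_eq]
    exact ⟨b, a', by simp⟩
  have hvz : v <:+: wpow z ((k + 1) * (q / p)) := by
    rw [← wpow_wpow, ← hwz]
    exact hvk.trans hyk2
  have hqle : q ≤ p := by
    exact Nat.sInf_le ⟨z, hzne, hzl, _, hvz⟩
  omega
end

section
/- Let Σ be a finite alphabet and let w : ℕ → Σ be a uniformly recurrent infinite word. Then the set of finite infixes of w is well-quasi-ordered by the infix relation. -/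
/-- A finite word `u` is an infix of the infinite word `w : ℕ → A`. -/
def IsInfInfix {A : Type*} (w : ℕ → A) (u : List A) : Prop :=
  ∃ i : ℕ, u = (List.range u.length).map fun j => w (i + j)

/-- An infinite word is uniformly recurrent if every finite infix `u` of it occurs
in every sufficiently long infix. -/
def UniformlyRecurrent {A : Type*} (w : ℕ → A) : Prop :=
  ∀ u : List A, IsInfInfix w u →
    ∃ k : ℕ, 1 ≤ k ∧ ∀ v : List A, IsInfInfix w v → k ≤ v.length → u <:+: v

/-- The set of finite infixes of a uniformly recurrent infinite
word is well-quasi-ordered by the infix relation. -/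
theorem uniformlyRecurrent_infixes_wqo
    {A : Type*} [Fintype A] (w : ℕ → A) (hw : UniformlyRecurrent w) :
    IsWqoOn {u | IsInfInfix w u} (· <:+: ·) := by
  intro f hf
  obtain ⟨k, -, hk⟩ := hw (f 0) (hf 0)
  by_cases h : ∃ j, 0 < j ∧ k ≤ (f j).length
  · obtain ⟨j, hj, hlen⟩ := h
    exact ⟨0, j, hj, hk _ (hf j) hlen⟩
  · push_neg at h
    have hfin : Finite {l : List A // l.length < k} :=
      (List.finite_length_lt A k).to_subtype
    let g : ℕ → {l : List A // l.length < k} :=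
      fun n => ⟨f (n + 1), h (n + 1) (Nat.succ_pos n)⟩
    obtain ⟨i, j, hne, heq⟩ := Finite.exists_ne_map_eq_of_infinite g
    have heq' : f (i + 1) = f (j + 1) := congrArg Subtype.val heq
    rcases lt_or_gt_of_ne hne with hij | hij
    · exact ⟨i + 1, j + 1, by omega, heq' ▸ List.infix_refl _⟩
    · exact ⟨j + 1, i + 1, by omega, heq' ▸ List.infix_refl _⟩
end

section
/- Let Σ be a finite alphabet and let w : ℕ → Σ be an infinite word. Then the set of finite infixes of w is well-quasi-ordered by the infix relation if and only if w is ultimately uniformly recurrent. -/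
/-- An infinite word is ultimately uniformly recurrent if some suffix of it is
uniformly recurrent. -/
def UltimatelyUniformlyRecurrent {A : Type*} (w : ℕ → A) : Prop :=
  ∃ N₀ : ℕ, UniformlyRecurrent fun n => w (N₀ + n)

namespace InfixWqoAux

variable {A : Type*}

def seg (w : ℕ → A) (i L : ℕ) : List A := (List.range L).map fun j => w (i + j)

@[simp] lemma seg_length (w : ℕ → A) (i L : ℕ) : (seg w i L).length = L := by
  simp [seg]

lemma seg_isInfInfix (w : ℕ → A) (i L : ℕ) : IsInfInfix w (seg w i L) :=
  ⟨i, by simp [seg]⟩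

lemma seg_add (w : ℕ → A) (i a b : ℕ) :
    seg w i (a + b) = seg w i a ++ seg w (i + a) b := by
  simp [seg, List.range_add, List.map_map, Function.comp_def, Nat.add_assoc]

lemma seg_prefix (w : ℕ → A) {L1 L2 : ℕ} (h : L1 ≤ L2) (i : ℕ) :
    seg w i L1 <+: seg w i L2 := by
  rw [show L2 = L1 + (L2 - L1) by omega, seg_add]
  exact List.prefix_append _ _

lemma seg_infix (w : ℕ → A) {i p L L' : ℕ} (h1 : i ≤ p) (h2 : p + L' ≤ i + L) :
    seg w p L' <:+: seg w i L := by
  have key : seg w i L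
      = seg w i (p - i) ++ (seg w p L' ++ seg w (p + L') (i + L - (p + L'))) := by
    conv_lhs => rw [show L = (p - i) + (L' + (i + L - (p + L'))) by omega]
    rw [seg_add, show i + (p - i) = p by omega, seg_add]
  exact ⟨seg w i (p - i), seg w (p + L') (i + L - (p + L')), by
    rw [List.append_assoc]; exact key.symm⟩

lemma infix_seg {w : ℕ → A} {u : List A} {i L : ℕ} (h : u <:+: seg w i L) :
    ∃ p, i ≤ p ∧ p + u.length ≤ i + L ∧ u = seg w p u.length := by
  obtain ⟨s, t, hst⟩ := h
  have hlen : s.length + (u.length + t.length) = L := by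
    have := congrArg List.length hst
    simp at this
    omega
  refine ⟨i + s.length, by omega, by omega, ?_⟩
  rw [← hlen, seg_add, seg_add, List.append_assoc] at hst
  obtain ⟨h1, h2⟩ := List.append_inj hst (by simp)
  exact (List.append_inj h2 (by simp)).1

lemma seg_eq_transfer {w : ℕ → A} {p q L off m : ℕ} (h : seg w p L = seg w q L)
    (hm : off + m ≤ L) : seg w (p + off) m = seg w (q + off) m := by
  rw [show L = off + (m + (L - off - m)) by omega] at h
  rw [seg_add, seg_add, seg_add, seg_add] at h
  obtain ⟨-, h2⟩ := List.append_inj h (by simp)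
  exact (List.append_inj h2 (by simp)).1

lemma isInfInfix_shift {w : ℕ → A} {N : ℕ} {u : List A}
    (h : IsInfInfix (fun n => w (N + n)) u) : IsInfInfix w u := by
  obtain ⟨i, hi⟩ := h
  exact ⟨N + i, by simpa [Nat.add_assoc] using hi⟩

lemma isInfInfix_of_seg {w : ℕ → A} {N p : ℕ} (hp : N ≤ p) (L : ℕ) :
    IsInfInfix (fun n => w (N + n)) (seg w p L) := by
  refine ⟨p - N, ?_⟩
  show seg w p L = seg (fun n => w (N + n)) (p - N) (seg w p L).length
  rw [seg_length, show seg (fun n => w (N + n)) (p - N) L = seg w (N + (p - N)) L by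
    simp [seg, Nat.add_assoc], Nat.add_sub_cancel' hp]

lemma exists_eq_of_bounded [Finite A] (g : ℕ → List A) (B : ℕ)
    (hB : ∀ n, (g n).length ≤ B) : ∃ i j, i < j ∧ g i = g j := by
  have hfin : Finite {l : List A | l.length ≤ B} := (List.finite_length_le A B).to_subtype
  obtain ⟨m, n, hmn, h⟩ := Finite.exists_ne_map_eq_of_infinite
    (fun n : ℕ => (⟨g n, hB n⟩ : {l : List A | l.length ≤ B}))
  have hg : g m = g n := congrArg Subtype.val h
  rcases hmn.lt_or_gt with h' | h'
  · exact ⟨m, n, h', hg⟩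
  · exact ⟨n, m, h', hg.symm⟩

end InfixWqoAux

open InfixWqoAux in
/-- The set of finite infixes of an infinite word `w` is
well-quasi-ordered by the infix relation iff `w` is ultimately uniformly recurrent. -/
theorem infixes_wqo_iff_ultimatelyUniformlyRecurrent
    {A : Type*} [Fintype A] (w : ℕ → A) :
    IsWqoOn {u | IsInfInfix w u} (· <:+: ·) ↔ UltimatelyUniformlyRecurrent w := by
  classical
  constructor
  · -- WQO → ultimately uniformly recurrent
    intro hwqo
    by_contra hnot
    simp only [UltimatelyUniformlyRecurrent, not_exists] at hnot
    by_cases hB : ∃ N : ℕ, ∀ u : List A, IsInfInfix (fun n => w (N + n)) u →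
        ∀ M : ℕ, ∃ p, M ≤ p ∧ u = seg w p u.length
    · -- Case B: some suffix all of whose infixes occur at arbitrarily large positions
      obtain ⟨N, hall⟩ := hB
      have hnUR := hnot N
      rw [UniformlyRecurrent] at hnUR
      push_neg at hnUR
      obtain ⟨u, hu, hwin⟩ := hnUR
      have hupos : 0 < u.length := by
        rcases Nat.eq_zero_or_pos u.length with h0 | h
        · obtain ⟨v, -, -, hvinf⟩ := hwin 1 le_rfl
          exact absurd ((List.eq_nil_of_length_eq_zero h0) ▸ (List.nil_infix : [] <:+: v)) hvinf
        · exact h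
      set Occ : ℕ → Prop := fun p => u = seg w p u.length with hOccdef
      have hocc : ∀ M, ∃ p, M ≤ p ∧ Occ p := hall u hu
      have hstep : ∀ G : ℕ, ∃ bd : ℕ × ℕ, Occ bd.1 ∧ Occ bd.2 ∧ bd.1 < bd.2 ∧
          G < bd.2 - bd.1 ∧ ∀ p, bd.1 < p → p < bd.2 → ¬ Occ p := by
        intro G
        obtain ⟨c, -, hc⟩ := hocc 0
        obtain ⟨v, hv, hvlen, hvinf⟩ := hwin (c + u.length + G + 1) (by omega)
        obtain ⟨a', ha'⟩ := hv
        have hva : v = seg w (N + a') v.length := by simpa [seg, Nat.add_assoc] using ha'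
        set a := N + a' with hadef
        set ℓ := v.length with hldef
        have havoid : ∀ p, a ≤ p → p + u.length ≤ a + ℓ → ¬ Occ p := by
          intro p h1 h2 hOp
          have hmid := seg_infix w h1 h2
          rw [← hOp, ← hva] at hmid
          exact hvinf hmid
        have hca : c < a := by
          by_contra h
          push_neg at h
          exact havoid c h (by omega) hc
        set b := Nat.findGreatest Occ a with hbdef
        have hOb : Occ b := Nat.findGreatest_spec hca.le hc
        have hba : b ≤ a := Nat.findGreatest_le a
        have hSne : {p | a + ℓ - u.length + 1 ≤ p ∧ Occ p}.Nonempty := by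
          obtain ⟨p, h1, h2⟩ := hocc (a + ℓ - u.length + 1)
          exact ⟨p, h1, h2⟩
        set d := sInf {p | a + ℓ - u.length + 1 ≤ p ∧ Occ p} with hddef
        have hd := Nat.sInf_mem hSne
        have hd1 : a + ℓ - u.length + 1 ≤ d := hd.1
        have hd2 : Occ d := hd.2
        refine ⟨(b, d), hOb, hd2, ?_, ?_, ?_⟩
        · show b < d
          omega
        · show G < d - b
          omega
        intro p hbp hpd hOp
        replace hbp : b < p := hbp
        replace hpd : p < d := hpd
        rcases le_or_gt p a with h1 | h1
        · exact Nat.findGreatest_is_greatest hbp h1 hOp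
        · rcases le_or_gt (p + u.length) (a + ℓ) with h2 | h2
          · exact havoid p h1.le h2 hOp
          · have : d ≤ p := Nat.sInf_le ⟨by omega, hOp⟩
            omega
      let stepf : ℕ → ℕ × ℕ := fun G => Classical.choose (hstep G)
      have stepf_spec : ∀ G, Occ (stepf G).1 ∧ Occ (stepf G).2 ∧ (stepf G).1 < (stepf G).2 ∧
          G < (stepf G).2 - (stepf G).1 ∧
          ∀ p, (stepf G).1 < p → p < (stepf G).2 → ¬ Occ p :=
        fun G => Classical.choose_spec (hstep G)
      let s : ℕ → ℕ × ℕ := fun n => Nat.rec (stepf 0) (fun _ prev => stepf (prev.2 - prev.1)) n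
      have hs : ∀ n, Occ (s n).1 ∧ Occ (s n).2 ∧ (s n).1 < (s n).2 ∧
          ∀ p, (s n).1 < p → p < (s n).2 → ¬ Occ p := by
        intro n
        cases n with
        | zero =>
          obtain ⟨h1, h2, h3, -, h5⟩ := stepf_spec 0
          exact ⟨h1, h2, h3, h5⟩
        | succ m =>
          obtain ⟨h1, h2, h3, -, h5⟩ := stepf_spec ((s m).2 - (s m).1)
          exact ⟨h1, h2, h3, h5⟩
      have hgap : StrictMono (fun n => (s n).2 - (s n).1) :=
        strictMono_nat_of_lt_succ (fun n => (stepf_spec ((s n).2 - (s n).1)).2.2.2.1)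
      obtain ⟨i, j, hij, hinf⟩ := hwqo
        (fun n => seg w (s n).1 ((s n).2 - (s n).1 + u.length))
        (fun n => seg_isInfInfix w _ _)
      obtain ⟨p, hp1, hp2, hpe⟩ := infix_seg hinf
      rw [seg_length] at hp2 hpe
      obtain ⟨hObi, hOdi, hbdi, -⟩ := hs i
      obtain ⟨hObj, hOdj, hbdj, huniq⟩ := hs j
      have hO1 : Occ p := by
        have := seg_eq_transfer hpe (off := 0) (m := u.length) (by omega)
        simp only [Nat.add_zero] at this
        exact hObi.trans this
      have hO2 : Occ (p + ((s i).2 - (s i).1)) := by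
        have := seg_eq_transfer hpe (off := (s i).2 - (s i).1) (m := u.length) le_rfl
        rw [show (s i).1 + ((s i).2 - (s i).1) = (s i).2 by omega] at this
        exact hOdi.trans this
      have hgij : (s i).2 - (s i).1 < (s j).2 - (s j).1 := hgap hij
      have he1 : p = (s j).1 ∨ p = (s j).2 := by
        by_contra hcon
        push_neg at hcon
        exact huniq p (by omega) (by omega) hO1
      have he2 : p + ((s i).2 - (s i).1) = (s j).1 ∨ p + ((s i).2 - (s i).1) = (s j).2 := by
        by_contra hcon
        push_neg at hcon
        exact huniq _ (by omega) (by omega) hO2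
      omega
    · -- Case A: every suffix has an infix occurring only boundedly often
      push_neg at hB
      choose U hU M hM using hB
      set Nseq : ℕ → ℕ := fun n => Nat.rec 0 (fun _ prev => max (prev + 1) (M prev)) n
        with hNseqdef
      have hNsucc : ∀ n, Nseq (n + 1) = max (Nseq n + 1) (M (Nseq n)) := fun n => rfl
      have hNmono : Monotone Nseq := monotone_nat_of_le_succ (fun n => by
        rw [hNsucc]; omega)
      obtain ⟨i, j, hij, hinf⟩ := hwqo (fun n => U (Nseq n))
        (fun n => isInfInfix_shift (hU (Nseq n)))
      obtain ⟨a, ha⟩ := hU (Nseq j)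
      have ha' : U (Nseq j) = seg w (Nseq j + a) (U (Nseq j)).length := by
        simpa [seg, Nat.add_assoc] using ha
      rw [ha'] at hinf
      obtain ⟨p, hp1, -, hpe⟩ := infix_seg hinf
      refine hM (Nseq i) p ?_ hpe
      have h1 : M (Nseq i) ≤ Nseq (i + 1) := by rw [hNsucc]; omega
      have h2 : Nseq (i + 1) ≤ Nseq j := hNmono hij
      omega
  · -- ultimately uniformly recurrent → WQO
    rintro ⟨N₀, hur⟩ f hf
    by_cases hocc : ∃ i p, N₀ ≤ p ∧ f i = seg w p (f i).length
    · obtain ⟨i, p, hpN, hfi⟩ := hocc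
      have hui : IsInfInfix (fun n => w (N₀ + n)) (f i) := by
        rw [hfi]; exact isInfInfix_of_seg hpN _
      obtain ⟨k, hk1, hk⟩ := hur (f i) hui
      by_cases hj : ∃ j, i < j ∧ N₀ + k ≤ (f j).length
      · obtain ⟨j, hij, hjlen⟩ := hj
        obtain ⟨q, hq⟩ := hf j
        have hfj : f j = seg w q (f j).length := hq
        have hq1 : q ≤ max q N₀ := le_max_left _ _
        have hq2 : N₀ ≤ max q N₀ := le_max_right _ _
        set q' := max q N₀ with hq'def
        set L' := q + (f j).length - q' with hL'def
        have hvinfix : seg w q' L' <:+: f j := by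
          rw [hfj]
          exact seg_infix w hq1 (by omega)
        have hvshift : IsInfInfix (fun n => w (N₀ + n)) (seg w q' L') :=
          isInfInfix_of_seg hq2 _
        have huv : f i <:+: seg w q' L' :=
          hk (seg w q' L') hvshift (by rw [seg_length]; omega)
        exact ⟨i, j, hij, huv.trans hvinfix⟩
      · push_neg at hj
        obtain ⟨i', j', hij', heq⟩ := exists_eq_of_bounded (fun m => f (i + 1 + m)) (N₀ + k)
          (fun m => by
            have := hj (i + 1 + m) (by omega)
            show (f (i + 1 + m)).length ≤ N₀ + k
            omega)
        exact ⟨i + 1 + i', i + 1 + j', by omega, by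
          show f (i + 1 + i') <:+: f (i + 1 + j')
          rw [show f (i + 1 + i') = f (i + 1 + j') from heq]⟩
    · push_neg at hocc
      have hp : ∀ n, ∃ p, p < N₀ ∧ f n = seg w p (f n).length := by
        intro n
        obtain ⟨p, hpe⟩ := hf n
        exact ⟨p, lt_of_not_ge (fun h => hocc n p h hpe), hpe⟩
      choose p hpN hpe using hp
      obtain ⟨y, hy⟩ := Finite.exists_infinite_fiber (fun n : ℕ => (⟨p n, hpN n⟩ : Fin N₀))
      have hS : ((fun n : ℕ => (⟨p n, hpN n⟩ : Fin N₀)) ⁻¹' {y}).Infinite :=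
        Set.infinite_coe_iff.mp hy
      have hTne : ((fun n => (f n).length) ''
          ((fun n : ℕ => (⟨p n, hpN n⟩ : Fin N₀)) ⁻¹' {y})).Nonempty :=
        hS.nonempty.image _
      obtain ⟨i, hiS, hilen⟩ := Nat.sInf_mem hTne
      obtain ⟨j, hjS, hij⟩ := hS.exists_gt i
      have hlen : (f i).length ≤ (f j).length :=
        le_trans (le_of_eq hilen) (Nat.sInf_le (Set.mem_image_of_mem _ hjS))
      have hpij : p i = p j := by
        have h1 : (⟨p i, hpN i⟩ : Fin N₀) = y := hiS
        have h2 : (⟨p j, hpN j⟩ : Fin N₀) = y := hjS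
        exact congrArg Fin.val (h1.trans h2.symm)
      refine ⟨i, j, hij, List.IsPrefix.isInfix ?_⟩
      rw [hpe i, hpe j, hpij]
      exact seg_prefix w hlen _
end

section
/- Let Σ be a finite alphabet and let w : ℤ → Σ be a bi-infinite word. Define the infinite words w₊ : ℕ → Σ and w₋ : ℕ → Σ by w₊(n) = w(n) and w₋(n) = w(−n). Then the set of finite infixes of w is well-quasi-ordered by the infix relation if and only if both w₊ and w₋ are ultimately uniformly recurrent. -/
/-- A finite word `u` is an infix of the bi-infinite word `w : ℤ → A`. -/
def IsBiInfix {A : Type*} (w : ℤ → A) (u : List A) : Prop :=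
  ∃ i : ℤ, u = (List.range u.length).map fun j => w (i + (j : ℤ))

/-!
If `w₊` and `w₋` are uniformly recurrent from positions `N` and `M` on, every infix of `w` lies
in the tail of `w₊`, or (reversed) in the tail of `w₋`, or covers one of the finitely many
positions in `[-M, N]`. Over a finite alphabet the infixes of a uniformly recurrent word are
well-quasi-ordered (a long infix contains any given one, and there are only finitely many short
ones), and the infixes covering a fixed position form a monotone image of `ℕ × ℕ`.

Conversely, the well-quasi-order passes to the infixes of `w₊` and, through reversal, of `w₋`.
For a one-sided word `x` with well-quasi-ordered infixes, from some point on every factor recurs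
infinitely often: otherwise there are factors occurring arbitrarily late but only finitely often,
and a monotone subsequence of them makes the first one occur arbitrarily late. A recurrent
factor `u` then recurs with bounded gaps: otherwise the windows `u ⋯ u` between consecutive
occurrences of `u` get arbitrarily long, and embedding a shorter one into a longer one puts an
occurrence of `u` strictly inside the longer window.
-/

namespace Words

open Set

variable {A ι : Type*}

section Factor

variable [AddMonoidWithOne ι] (x : ι → A)

def factor (i : ι) (L : ℕ) : List A := (List.range L).map fun j : ℕ => x (i + j)

@[simp] theorem length_factor (i : ι) (L : ℕ) : (factor x i L).length = L := by simp [factor]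

@[simp] theorem getElem_factor (i : ι) (L j : ℕ) (h : j < (factor x i L).length) :
    (factor x i L)[j] = x (i + j) := by simp [factor]

theorem factor_add (i : ι) (m n : ℕ) :
    factor x i (m + n) = factor x i m ++ factor x (i + m) n := by
  simp [factor, List.range_add, add_assoc]

theorem factor_shift (N i : ι) (L : ℕ) :
    factor (fun n => x (N + n)) i L = factor x (N + i) L := by
  simp [factor, add_assoc]

theorem infix_factor_iff {u : List A} {i : ι} {L : ℕ} :
    u <:+: factor x i L ↔ ∃ s, s + u.length ≤ L ∧ factor x (i + s) u.length = u := by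
  constructor
  · rintro ⟨s, t, hst⟩
    have hL : L = s.length + (u.length + t.length) := by
      simpa [add_assoc] using (congrArg List.length hst).symm
    rw [hL, factor_add, factor_add, ← List.append_assoc] at hst
    obtain ⟨hs, -⟩ := List.append_inj hst (by simp)
    exact ⟨s.length, by omega, (List.append_inj hs.symm (by simp)).2⟩
  · rintro ⟨s, hs, hsu⟩
    obtain ⟨t, rfl⟩ : ∃ t, L = s + u.length + t := ⟨L - (s + u.length), by omega⟩
    refine ⟨factor x i s, factor x (i + ↑(s + u.length)) t, ?_⟩
    rw [factor_add, factor_add, hsu]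

theorem factor_add_eq_of_factor_eq {i j : ι} {L k M : ℕ} (h : factor x i L = factor x j L)
    (hkM : k + M ≤ L) : factor x (i + k) M = factor x (j + k) M := by
  apply List.ext_getElem (by simp)
  intro n hn _
  rw [length_factor] at hn
  have := List.getElem_of_eq h (by simp; omega : k + n < (factor x i L).length)
  simpa [add_assoc] using this

end Factor

theorem isInfInfix_iff {x : ℕ → A} {u : List A} :
    IsInfInfix x u ↔ ∃ i, factor x i u.length = u := by
  simp [IsInfInfix, factor, eq_comm]

theorem isBiInfix_iff {w : ℤ → A} {u : List A} :
    IsBiInfix w u ↔ ∃ i, factor w i u.length = u := by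
  simp [IsBiInfix, factor, eq_comm, ← List.map_eq_flatMap, Function.comp_def]

theorem isWqoOn_iff_partiallyWellOrderedOn {L : Set (List A)} {r : List A → List A → Prop} :
    IsWqoOn L r ↔ L.PartiallyWellOrderedOn r :=
  partiallyWellOrderedOn_iff_exists_lt.symm

def Syndetic (S : Set ℕ) : Prop := ∃ G, ∀ a, ∃ i ∈ S, a ≤ i ∧ i ≤ a + G

theorem exists_consecutive_add_lt_of_not_syndetic {S : Set ℕ} (hS : S.Infinite)
    (hsyn : ¬ Syndetic S) (G : ℕ) :
    ∃ p ∈ S, ∃ q ∈ S, p + G < q ∧ ∀ r ∈ S, r ≤ p ∨ q ≤ r := by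
  classical
  obtain ⟨p₀, hp₀⟩ := hS.nonempty
  have hgap : ∀ n, ∃ a, ∀ i ∈ S, a ≤ i → a + n < i := by simpa [Syndetic] using hsyn
  obtain ⟨a, ha⟩ := hgap (G + p₀)
  have hq : ∃ q, q ∈ S ∧ a ≤ q := (hS.exists_gt a).imp fun _ hq => ⟨hq.1, hq.2.le⟩
  obtain ⟨hqS, haq⟩ := Nat.find_spec hq
  have hq_gt := ha _ hqS haq
  set q := Nat.find hq
  set p := Nat.findGreatest (· ∈ S) (q - 1)
  have hpS : p ∈ S := Nat.findGreatest_spec (m := p₀) (by omega) hp₀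
  have hpq : p ≤ q - 1 := Nat.findGreatest_le _
  have hpa : p < a := by
    by_contra! hap
    exact absurd (Nat.find_min' hq ⟨hpS, hap⟩) (by omega)
  refine ⟨p, hpS, q, hqS, by omega, fun r hr => ?_⟩
  by_contra! hpr
  exact Nat.findGreatest_is_greatest hpr.1 (by omega) hr

def occurrences (x : ℕ → A) (u : List A) : Set ℕ := {i | factor x i u.length = u}

section OneSided

variable {x : ℕ → A}

theorem exists_forall_occurrences_infinite_of_pwo
    (h : {u | IsInfInfix x u}.PartiallyWellOrderedOn (· <:+: ·)) :
    ∃ N, ∀ u, ∀ i ∈ occurrences x u, N ≤ i → (occurrences x u).Infinite := by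
  by_contra! hfin
  choose U I hI hNI hfin using hfin
  obtain ⟨g, hg⟩ := h.exists_monotone_subseq (f := U) fun n => isInfInfix_iff.2 ⟨I n, hI n⟩
  refine (hfin (g 0)).not_infinite (infinite_of_forall_exists_gt fun n => ?_)
  have hinf := hg 0 (n + 1) (Nat.zero_le _)
  rw [← hI (g (n + 1))] at hinf
  obtain ⟨s, -, hs⟩ := (infix_factor_iff x).1 hinf
  have hI_ge := hNI (g (n + 1))
  have hg_ge : n + 1 ≤ g (n + 1) := g.strictMono.id_le (n + 1)
  exact ⟨I (g (n + 1)) + s, hs, by omega⟩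

theorem syndetic_occurrences_of_pwo
    (h : {u | IsInfInfix x u}.PartiallyWellOrderedOn (· <:+: ·)) {u : List A}
    (hu : (occurrences x u).Infinite) : Syndetic (occurrences x u) := by
  by_contra hsyn
  choose P hP Q hQ hPQ hcons using exists_consecutive_add_lt_of_not_syndetic hu hsyn
  obtain ⟨g, hg⟩ := h.exists_monotone_subseq
    (f := fun n => factor x (P n) (Q n - P n + u.length))
    fun n => isInfInfix_iff.2 ⟨P n, by rw [length_factor]⟩
  obtain ⟨i, m, hm, hinf⟩ : ∃ i m, Q i - P i ≤ m ∧
      factor x (P i) (Q i - P i + u.length) <:+: factor x (P m) (Q m - P m + u.length) :=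
    ⟨g 0, g (Q (g 0) - P (g 0)), g.strictMono.id_le _, hg _ _ (Nat.zero_le _)⟩
  obtain ⟨s, hs, hsub⟩ := (infix_factor_iff x).1 hinf
  simp only [length_factor, Nat.cast_id] at hs hsub
  have hPQi := hPQ i
  have hPQm := hPQ m
  -- `u` occurs at distance `Q i - P i < Q m - P m` inside the window between the
  -- consecutive occurrences `P m` and `Q m`
  have h₁ : P m + s ∈ occurrences x u := by
    have := factor_add_eq_of_factor_eq x hsub (k := 0) (M := u.length) (by omega)
    simpa [occurrences] using this.trans (hP i)
  have h₂ : P m + s + (Q i - P i) ∈ occurrences x u := by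
    have := factor_add_eq_of_factor_eq x hsub (k := Q i - P i) (M := u.length) (by omega)
    simp only [Nat.cast_id, show P i + (Q i - P i) = Q i by omega] at this
    exact this.trans (hQ i)
  rcases hcons m _ h₁ with h₁ | h₁ <;> rcases hcons m _ h₂ with h₂ | h₂ <;> omega

theorem ultimatelyUniformlyRecurrent_of_pwo
    (h : {u | IsInfInfix x u}.PartiallyWellOrderedOn (· <:+: ·)) :
    UltimatelyUniformlyRecurrent x := by
  obtain ⟨N, hN⟩ := exists_forall_occurrences_infinite_of_pwo h
  refine ⟨N, fun u hu => ?_⟩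
  obtain ⟨i, hi⟩ := isInfInfix_iff.1 hu
  rw [factor_shift] at hi
  obtain ⟨G, hG⟩ := syndetic_occurrences_of_pwo h (hN u (N + i) hi (Nat.le_add_right N i))
  refine ⟨G + u.length + 1, by omega, fun v hv hlen => ?_⟩
  obtain ⟨b, hb⟩ := isInfInfix_iff.1 hv
  rw [factor_shift] at hb
  obtain ⟨m, hm, hbm, hmb⟩ := hG (N + b)
  rw [← hb, ← show factor x m u.length = u from hm]
  refine (infix_factor_iff x).2 ⟨m - (N + b), by rw [length_factor]; omega, ?_⟩
  rw [Nat.cast_id, Nat.add_sub_cancel' hbm, length_factor]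

end OneSided

theorem partiallyWellOrderedOn_of_uniformlyRecurrent [Finite A] {x : ℕ → A}
    (hx : UniformlyRecurrent x) : {u | IsInfInfix x u}.PartiallyWellOrderedOn (· <:+: ·) := by
  rw [partiallyWellOrderedOn_iff_exists_lt]
  intro f hf
  obtain ⟨k, -, hk⟩ := hx (f 0) (hf 0)
  by_cases hlong : ∃ j, 1 ≤ j ∧ k ≤ (f j).length
  · obtain ⟨j, hj, hjk⟩ := hlong
    exact ⟨0, j, hj, hk _ (hf j) hjk⟩
  · push Not at hlong
    obtain ⟨m, n, hmn, he⟩ := Finite.exists_lt_map_eq_of_forall_mem (f := fun j => f (j + 1))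
      (fun j => hlong (j + 1) (Nat.le_add_left 1 j)) (List.finite_length_lt A k)
    exact ⟨m + 1, n + 1, by omega, by rw [he]⟩

theorem partiallyWellOrderedOn_image_reverse {s : Set (List A)}
    (h : s.PartiallyWellOrderedOn (· <:+: ·)) :
    (List.reverse '' s).PartiallyWellOrderedOn (· <:+: ·) :=
  h.image_of_monotone_on fun _ _ _ _ => List.reverse_infix.2

theorem factor_natCast (w : ℤ → A) (i L : ℕ) :
    factor (fun n : ℕ => w n) i L = factor w i L := by
  simp [factor]

theorem isBiInfix_of_isInfInfix {w : ℤ → A} {u : List A}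
    (hu : IsInfInfix (fun n : ℕ => w n) u) : IsBiInfix w u := by
  obtain ⟨i, hi⟩ := isInfInfix_iff.1 hu
  exact isBiInfix_iff.2 ⟨i, by rw [← factor_natCast, hi]⟩

theorem isInfInfix_factor_of_le {w : ℤ → A} {N : ℕ} {i : ℤ} (hi : (N : ℤ) ≤ i) (L : ℕ) :
    IsInfInfix (fun n : ℕ => w ↑(N + n)) (factor w i L) := by
  refine isInfInfix_iff.2 ⟨(i - N).toNat, ?_⟩
  rw [length_factor, factor_shift (fun n : ℕ => w n), factor_natCast]
  congr 1
  omega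

theorem reverse_factor_comp_neg (w : ℤ → A) (i : ℤ) (L : ℕ) :
    (factor (fun z => w (-z)) i L).reverse = factor w (1 - (i + L)) L := by
  apply List.ext_getElem (by simp)
  intro j hj _
  simp only [List.length_reverse, length_factor] at hj
  simp only [List.getElem_reverse, getElem_factor, length_factor]
  congr 1
  omega

theorem isBiInfix_comp_neg_iff {w : ℤ → A} {u : List A} :
    IsBiInfix (fun z => w (-z)) u ↔ IsBiInfix w u.reverse := by
  simp only [isBiInfix_iff, List.length_reverse]
  constructor
  · rintro ⟨i, hi⟩
    exact ⟨1 - (i + u.length), by rw [← reverse_factor_comp_neg, hi]⟩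
  · rintro ⟨i, hi⟩
    refine ⟨1 - (i + u.length), ?_⟩
    rw [← List.reverse_inj, reverse_factor_comp_neg, ← hi]
    congr 1
    ring

theorem partiallyWellOrderedOn_isBiInfix_comp_neg {w : ℤ → A}
    (h : {u | IsBiInfix w u}.PartiallyWellOrderedOn (· <:+: ·)) :
    {u | IsBiInfix (fun z => w (-z)) u}.PartiallyWellOrderedOn (· <:+: ·) :=
  (partiallyWellOrderedOn_image_reverse h).mono fun u hu =>
    ⟨u.reverse, isBiInfix_comp_neg_iff.1 hu, u.reverse_reverse⟩

def factorsThrough (w : ℤ → A) (p : ℤ) : Set (List A) :=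
  range fun ab : ℕ × ℕ => factor w (p - ab.1) (ab.1 + ab.2)

theorem partiallyWellOrderedOn_factorsThrough (w : ℤ → A) (p : ℤ) :
    (factorsThrough w p).PartiallyWellOrderedOn (· <:+: ·) := by
  rw [factorsThrough, ← image_univ]
  refine (isPWO_univ_iff.2 inferInstance).image_of_monotone_on ?_
  rintro ⟨a, b⟩ - ⟨a', b'⟩ - ⟨ha, hb⟩
  refine (infix_factor_iff w).2 ⟨a' - a, by simp only [length_factor]; omega, ?_⟩
  simp only [length_factor]
  congr 1
  push_cast [ha]
  ring

theorem isBiInfix_cases {w : ℤ → A} (N M : ℕ) {u : List A} (hu : IsBiInfix w u) :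
    IsInfInfix (fun n : ℕ => w ↑(N + n)) u ∨
      IsInfInfix (fun n : ℕ => w (-↑(M + n))) u.reverse ∨
      ∃ p ∈ Finset.Icc (-M : ℤ) N, u ∈ factorsThrough w p := by
  obtain ⟨i, hi⟩ := isBiInfix_iff.1 hu
  generalize u.length = L at hi
  subst hi
  by_cases hright : (N : ℤ) ≤ i
  · exact Or.inl (isInfInfix_factor_of_le hright L)
  by_cases hleft : i + L ≤ 1 - (M : ℤ)
  · have hrev := reverse_factor_comp_neg w (1 - (i + L)) L
    rw [show 1 - (1 - (i + L) + L) = i by ring] at hrev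
    rw [← hrev, List.reverse_reverse]
    exact Or.inr (Or.inl (isInfInfix_factor_of_le (w := fun z => w (-z)) (by omega) L))
  · set p := max i (-M)
    refine Or.inr (Or.inr ⟨p, ?_, ⟨(p - i).toNat, L - (p - i).toNat⟩, ?_⟩)
    · rw [Finset.mem_Icc]
      omega
    · dsimp only
      congr 1 <;> omega

theorem partiallyWellOrderedOn_isBiInfix [Finite A] {w : ℤ → A} {N M : ℕ}
    (hright : UniformlyRecurrent fun n : ℕ => w ↑(N + n))
    (hleft : UniformlyRecurrent fun n : ℕ => w (-↑(M + n))) :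
    {u | IsBiInfix w u}.PartiallyWellOrderedOn (· <:+: ·) := by
  have hcenter := (Finset.partiallyWellOrderedOn_sup (Finset.Icc (-M : ℤ) N)).2
    fun p _ => partiallyWellOrderedOn_factorsThrough w p
  refine (((partiallyWellOrderedOn_of_uniformlyRecurrent hright).union
    (partiallyWellOrderedOn_image_reverse
      (partiallyWellOrderedOn_of_uniformlyRecurrent hleft))).union hcenter).mono
    fun u hu => ?_
  rcases isBiInfix_cases N M hu with h | h | ⟨p, hp, h⟩
  · exact Or.inl (Or.inl h)
  · exact Or.inl (Or.inr ⟨u.reverse, h, u.reverse_reverse⟩)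
  · rw [Finset.sup_set_eq_biUnion]
    exact Or.inr (mem_biUnion hp h)

end Words

open Words in
/-- The set of finite infixes of a bi-infinite word `w` is
well-quasi-ordered by the infix relation iff both one-sided words `w₊ : n ↦ w n`
and `w₋ : n ↦ w (−n)` are ultimately uniformly recurrent. -/
theorem biInfinite_infixes_wqo_iff
    {A : Type*} [Fintype A] (w : ℤ → A) :
    IsWqoOn {u | IsBiInfix w u} (· <:+: ·)
    ↔
    (UltimatelyUniformlyRecurrent fun n : ℕ => w (n : ℤ)) ∧
    (UltimatelyUniformlyRecurrent fun n : ℕ => w (-(n : ℤ))) := by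
  rw [isWqoOn_iff_partiallyWellOrderedOn]
  constructor
  · intro h
    exact ⟨ultimatelyUniformlyRecurrent_of_pwo (h.mono fun _ => isBiInfix_of_isInfInfix),
      ultimatelyUniformlyRecurrent_of_pwo
        ((partiallyWellOrderedOn_isBiInfix_comp_neg h).mono
          fun _ => isBiInfix_of_isInfInfix (w := fun z => w (-z)))⟩
  · rintro ⟨⟨N, hright⟩, ⟨M, hleft⟩⟩
    exact partiallyWellOrderedOn_isBiInfix hright hleft
end

section
/- There exists a language L over the two-letter alphabet {a, b} such that L is a chain for the infix relation (any two words of L are comparable by the infix relation), but the infix-downward closure of L is not well-quasi-ordered by the infix relation. -/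
/-!
Take `a = true`, `b = false` and `wₙ = a b a b² a ⋯ a bⁿ a`. Each `wₙ` is a prefix of `wₙ₊₁`, so
the `wₙ` form a chain, and `wₙ₊₁` ends with `a bⁿ⁺¹ a`. These factors form an infinite antichain:
an infix of `a bʲ a` containing both of its `a`s must be all of it, since `a bʲ a` begins and
ends with `a`.
-/

section Infix

variable {α : Type*}

theorem isChainFor_range_of_isPrefix_succ {f : ℕ → List α} (hf : ∀ n, f n <+: f (n + 1)) :
    IsChainFor (Set.range f) (· <:+: ·) := by
  have mono : ∀ {m n}, m ≤ n → f m <+: f n := fun h => by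
    induction h with
    | refl => exact List.prefix_refl _
    | step _ ih => exact ih.trans (hf _)
  rintro _ ⟨m, rfl⟩ _ ⟨n, rfl⟩
  rcases le_total m n with h | h
  · exact Or.inl (mono h).isInfix
  · exact Or.inr (mono h).isInfix

theorem List.IsInfix.eq_of_count_le [DecidableEq α] {a : α} {u v : List α} (h : u <:+: v)
    (hcount : v.count a ≤ u.count a) (hhead : v.head? = some a) (hlast : v.getLast? = some a) :
    u = v := by
  obtain ⟨s, t, rfl⟩ := h
  simp only [List.count_append] at hcount
  have hs : s = [] := by
    rcases s with _ | ⟨x, s⟩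
    · rfl
    · obtain rfl : x = a := by simpa using hhead
      simp only [List.count_cons_self] at hcount
      omega
  subst hs
  have ht : t = [] := by
    rcases List.eq_nil_or_concat t with rfl | ⟨t, y, rfl⟩
    · rfl
    · rw [List.concat_eq_append] at hlast hcount
      obtain rfl : y = a := by simpa [← List.append_assoc] using hlast
      simp only [List.count_append, List.count_singleton_self] at hcount
      omega
  simp [ht]

end Infix

def bracketWord (n : ℕ) : List Bool := true :: (List.replicate n false ++ [true])

def chainWord : ℕ → List Bool
  | 0 => [true]
  | n + 1 => chainWord n ++ (List.replicate (n + 1) false ++ [true])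

theorem bracketWord_infix_bracketWord_iff {i j : ℕ} : bracketWord i <:+: bracketWord j ↔ i = j := by
  refine ⟨fun h => ?_, fun h => h ▸ List.infix_refl _⟩
  have := h.eq_of_count_le (a := true) (by simp [bracketWord, List.count_replicate]) rfl
    (by rw [bracketWord, ← List.cons_append, List.getLast?_concat])
  simpa [bracketWord] using this

theorem chainWord_prefix_succ (n : ℕ) : chainWord n <+: chainWord (n + 1) :=
  List.prefix_append _ _

theorem true_suffix_chainWord (n : ℕ) : [true] <:+ chainWord n := by
  cases n with
  | zero => exact List.suffix_refl _
  | succ n => exact (List.suffix_append _ _).trans (List.suffix_append _ _)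

theorem bracketWord_infix_chainWord (n : ℕ) : bracketWord (n + 1) <:+: chainWord (n + 1) := by
  obtain ⟨p, hp⟩ := true_suffix_chainWord n
  exact ⟨p, [], by simp [chainWord, bracketWord, ← hp]⟩

/-- Over a two-letter alphabet there is a chain for the infix
relation whose infix-downward closure is not well-quasi-ordered by the infix
relation. -/
theorem exists_infix_chain_with_non_wqo_downward_closure :
    ∃ L : Set (List Bool),
      IsChainFor L (· <:+: ·) ∧
      ¬ IsWqoOn {u | ∃ v ∈ L, u <:+: v} (· <:+: ·) := by
  refine ⟨Set.range chainWord, isChainFor_range_of_isPrefix_succ chainWord_prefix_succ, ?_⟩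
  intro hwqo
  obtain ⟨i, j, hij, hinfix⟩ := hwqo (fun n => bracketWord (n + 1))
    fun n => ⟨chainWord (n + 1), ⟨n + 1, rfl⟩, bracketWord_infix_chainWord n⟩
  have := bracketWord_infix_bracketWord_iff.mp hinfix
  omega
end
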